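/- For a connected graph Σ with at least two vertices and diameter d, the diameter of the subdivision graph S(Σ) equals 2d + 2 if and only if there exist edges e = {x,y} and f = {u,v} in Σ with d_Σ(x,u) = d_Σ(x,v) = d_Σ(y,u) = d_Σ(y,v) = d. -/

import Mathlib

open SimpleGraph

/-- The subdivision graph of a simple graph `S`: vertex set `V ⊕ E(S)`,
with `x ∈ V` adjacent to `e ∈ E(S)` iff `x ∈ e`. -/
def subdiv {V : Type*} (S : SimpleGraph V) : SimpleGraph (V ⊕ S.edgeSet) where
  Adj a b :=
    (∃ (x : V) (e : S.edgeSet), a = Sum.inl x ∧ b = Sum.inr e ∧ x ∈ (e : Sym2 V)) ∨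
    (∃ (x : V) (e : S.edgeSet), b = Sum.inl x ∧ a = Sum.inr e ∧ x ∈ (e : Sym2 V))
  symm := ⟨fun a b h => h.elim (fun ⟨x, e, h1, h2, h3⟩ => Or.inr ⟨x, e, h1, h2, h3⟩)
    (fun ⟨x, e, h1, h2, h3⟩ => Or.inl ⟨x, e, h1, h2, h3⟩)⟩
  loopless := by
    refine ⟨?_⟩
    rintro a (⟨x, e, h1, h2, _⟩ | ⟨x, e, h1, h2, _⟩) <;> rw [h1] at h2 <;>
      exact Sum.inl_ne_inr h2

namespace SubdivAux

variable {V : Type*} {S : SimpleGraph V}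

lemma adj_mk {x : V} {e : S.edgeSet} (hx : x ∈ (e : Sym2 V)) :
    (subdiv S).Adj (Sum.inl x) (Sum.inr e) :=
  Or.inl ⟨x, e, rfl, rfl, hx⟩

lemma adj_of_inl {x : V} {c : V ⊕ S.edgeSet} (h : (subdiv S).Adj (Sum.inl x) c) :
    ∃ e : S.edgeSet, c = Sum.inr e ∧ x ∈ (e : Sym2 V) := by
  rcases h with ⟨x', e, h1, h2, h3⟩ | ⟨x', e, h1, h2, h3⟩
  · obtain rfl : x = x' := by injection h1
    exact ⟨e, h2, h3⟩
  · exact absurd h2 (by simp)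

lemma adj_of_inr {e : S.edgeSet} {c : V ⊕ S.edgeSet} (h : (subdiv S).Adj (Sum.inr e) c) :
    ∃ x : V, c = Sum.inl x ∧ x ∈ (e : Sym2 V) := by
  rcases h with ⟨x', e', h1, h2, h3⟩ | ⟨x', e', h1, h2, h3⟩
  · exact absurd h1 (by simp)
  · obtain rfl : e = e' := by injection h2
    exact ⟨x', h1, h3⟩

lemma edge_repr (e : S.edgeSet) : ∃ u v : V, S.Adj u v ∧ (e : Sym2 V) = s(u, v) := by
  obtain ⟨e, he⟩ := e
  induction e using Sym2.ind with
  | _ u v => exact ⟨u, v, he, rfl⟩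

lemma dist_le_one_of_mem {x x' : V} {e : S.edgeSet}
    (hx : x ∈ (e : Sym2 V)) (hx' : x' ∈ (e : Sym2 V)) : S.dist x x' ≤ 1 := by
  obtain ⟨u, v, huv, hrep⟩ := edge_repr e
  rw [hrep] at hx hx'
  rcases Sym2.mem_iff.mp hx with rfl | rfl <;> rcases Sym2.mem_iff.mp hx' with rfl | rfl
  · simp [SimpleGraph.dist_self]
  · exact le_trans (S.dist_le huv.toWalk) (by simp)
  · exact le_trans (S.dist_le huv.symm.toWalk) (by simp)
  · simp [SimpleGraph.dist_self]

/-- Lift a walk in `S` to a walk in the subdivision graph of twice the length. -/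
def liftWalk : ∀ {a b : V}, S.Walk a b → (subdiv S).Walk (Sum.inl a) (Sum.inl b)
  | _, _, SimpleGraph.Walk.nil => SimpleGraph.Walk.nil
  | a, _, SimpleGraph.Walk.cons (v := c) h p =>
      SimpleGraph.Walk.cons (adj_mk (e := ⟨s(a, c), h⟩) (Sym2.mem_mk_left a c))
        (SimpleGraph.Walk.cons
          ((adj_mk (e := ⟨s(a, c), h⟩) (Sym2.mem_mk_right a c)).symm) (liftWalk p))

@[simp] lemma liftWalk_length {a b : V} (p : S.Walk a b) :
    (liftWalk p).length = 2 * p.length := by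
  induction p with
  | nil => rfl
  | cons h p ih => simp [liftWalk, ih]; omega

lemma dist_inl_inl_le (hconn : S.Connected) (x y : V) :
    (subdiv S).dist (Sum.inl x) (Sum.inl y) ≤ 2 * S.dist x y := by
  obtain ⟨p, hp⟩ := (hconn.preconnected x y).exists_walk_length_eq_dist
  calc (subdiv S).dist (Sum.inl x) (Sum.inl y) ≤ (liftWalk p).length := dist_le _
    _ = 2 * S.dist x y := by simp [hp]

lemma dist_inl_inr_le (hconn : S.Connected) {x u : V} {f : S.edgeSet}
    (hu : u ∈ (f : Sym2 V)) :
    (subdiv S).dist (Sum.inl x) (Sum.inr f) ≤ 2 * S.dist x u + 1 := by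
  obtain ⟨p, hp⟩ := (hconn.preconnected x u).exists_walk_length_eq_dist
  calc (subdiv S).dist (Sum.inl x) (Sum.inr f)
      ≤ ((liftWalk p).concat (adj_mk hu)).length := dist_le _
    _ = 2 * S.dist x u + 1 := by simp [SimpleGraph.Walk.length_concat, hp]

lemma dist_inr_inr_le (hconn : S.Connected) {x u : V} {e f : S.edgeSet}
    (hx : x ∈ (e : Sym2 V)) (hu : u ∈ (f : Sym2 V)) :
    (subdiv S).dist (Sum.inr e) (Sum.inr f) ≤ 2 * S.dist x u + 2 := by
  obtain ⟨p, hp⟩ := (hconn.preconnected x u).exists_walk_length_eq_dist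
  calc (subdiv S).dist (Sum.inr e) (Sum.inr f)
      ≤ (SimpleGraph.Walk.cons (adj_mk hx).symm
          ((liftWalk p).concat (adj_mk hu))).length := dist_le _
    _ = 2 * S.dist x u + 2 := by simp [SimpleGraph.Walk.length_concat, hp]

/-- Lower bound: a walk between two `inl` vertices has length at least twice the distance. -/
lemma lower_aux (hconn : S.Connected) :
    ∀ n, ∀ {a b : V ⊕ S.edgeSet} (w : (subdiv S).Walk a b), w.length = n →
      ∀ {x u : V}, a = Sum.inl x → b = Sum.inl u → 2 * S.dist x u ≤ n := by
  intro n
  induction n using Nat.strong_induction_on with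
  | _ n ih =>
    intro a b w hlen x u ha hb
    cases w with
    | nil =>
      subst ha; obtain rfl : x = u := by injection hb
      simp [SimpleGraph.dist_self]
    | cons h w' =>
      subst ha
      obtain ⟨e, rfl, hxe⟩ := adj_of_inl h
      cases w' with
      | nil => exact absurd hb (by simp)
      | cons h2 w'' =>
        obtain ⟨x', rfl, hx'e⟩ := adj_of_inr h2
        have hlt : w''.length < n := by simp at hlen; omega
        have hrec := ih w''.length hlt w'' rfl rfl hb
        have htri := hconn.dist_triangle (u := x) (v := x') (w := u)
        have h1 := dist_le_one_of_mem hxe hx'e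
        simp only [SimpleGraph.Walk.length_cons] at hlen
        omega

lemma le_of_walk_inl_inl (hconn : S.Connected) {x u : V}
    (w : (subdiv S).Walk (Sum.inl x) (Sum.inl u)) : 2 * S.dist x u ≤ w.length :=
  lower_aux hconn w.length w rfl rfl rfl

lemma le_of_walk_inr_inl (hconn : S.Connected) {f : S.edgeSet} {x : V}
    (w : (subdiv S).Walk (Sum.inr f) (Sum.inl x)) :
    ∃ u : V, u ∈ (f : Sym2 V) ∧ 2 * S.dist u x + 1 ≤ w.length := by
  cases w with
  | cons h w' =>
    obtain ⟨u, rfl, hu⟩ := adj_of_inr h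
    refine ⟨u, hu, ?_⟩
    have := le_of_walk_inl_inl hconn w'
    simp only [SimpleGraph.Walk.length_cons]
    omega

lemma le_of_walk_inr_inr (hconn : S.Connected) {e f : S.edgeSet} (hef : e ≠ f)
    (w : (subdiv S).Walk (Sum.inr e) (Sum.inr f)) :
    ∃ x u : V, x ∈ (e : Sym2 V) ∧ u ∈ (f : Sym2 V) ∧ 2 * S.dist x u + 2 ≤ w.length := by
  cases w with
  | nil => exact absurd rfl hef
  | cons h w' =>
    obtain ⟨x, rfl, hx⟩ := adj_of_inr h
    obtain ⟨u, hu, hlen⟩ := le_of_walk_inr_inl hconn w'.reverse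
    refine ⟨x, u, hx, hu, ?_⟩
    rw [SimpleGraph.Walk.length_reverse] at hlen
    rw [S.dist_comm] at hlen
    simp only [SimpleGraph.Walk.length_cons]
    omega

lemma subdiv_connected (hconn : S.Connected) : (subdiv S).Connected := by
  have hne : Nonempty V := hconn.nonempty
  have key : ∀ x y : V, (subdiv S).Reachable (Sum.inl x) (Sum.inl y) := fun x y =>
    (hconn.preconnected x y).elim fun p => ⟨liftWalk p⟩
  have toInl : ∀ a : V ⊕ S.edgeSet, ∃ x, (subdiv S).Reachable a (Sum.inl x) := by
    rintro (x | e)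
    · exact ⟨x, SimpleGraph.Reachable.refl _⟩
    · obtain ⟨u, v, _, hrep⟩ := edge_repr e
      exact ⟨u, ⟨((adj_mk (by rw [hrep]; exact Sym2.mem_mk_left u v)).symm).toWalk⟩⟩
  constructor
  intro a b
  obtain ⟨x, hax⟩ := toInl a
  obtain ⟨y, hby⟩ := toInl b
  exact hax.trans ((key x y).trans hby.symm)

lemma ediam_ne_top_of_connected {α : Type*} [Nonempty α] [Finite α] {G : SimpleGraph α}
    (h : G.Connected) : G.ediam ≠ ⊤ := by
  obtain ⟨u, v, huv⟩ := G.exists_edist_eq_ediam_of_finite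
  rw [← huv]
  exact SimpleGraph.edist_ne_top_iff_reachable.mpr (h.preconnected u v)

end SubdivAux

open SubdivAux in
/-- The diameter of the subdivision graph equals `2 * diam S + 2` iff `S` has edges
`{x,y}` and `{u,v}` with all four cross-distances equal to `diam S`. -/
theorem stmt_6 {V : Type*} [Fintype V] (S : SimpleGraph V) (hconn : S.Connected)
    (hV : Nontrivial V) :
    (subdiv S).diam = 2 * S.diam + 2 ↔
      ∃ x y u v : V, S.Adj x y ∧ S.Adj u v ∧
        S.dist x u = S.diam ∧ S.dist x v = S.diam ∧
        S.dist y u = S.diam ∧ S.dist y v = S.diam := by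
  have hne : Nonempty V := hconn.nonempty
  have hSediam : S.ediam ≠ ⊤ := ediam_ne_top_of_connected hconn
  have hdle : ∀ x y : V, S.dist x y ≤ S.diam := fun x y => S.dist_le_diam hSediam
  have hsconn : (subdiv S).Connected := subdiv_connected hconn
  have hsne : Nonempty (V ⊕ S.edgeSet) := ⟨Sum.inl hne.some⟩
  have hsediam : (subdiv S).ediam ≠ ⊤ := ediam_ne_top_of_connected hsconn
  constructor
  · intro hdiam
    obtain ⟨a, b, hab⟩ := (subdiv S).exists_dist_eq_diam
    rw [hdiam] at hab
    match a, b with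
    | Sum.inl x, Sum.inl y =>
      have := dist_inl_inl_le hconn x y
      have := hdle x y
      omega
    | Sum.inl x, Sum.inr f =>
      obtain ⟨u, v, _, hrep⟩ := edge_repr f
      have := dist_inl_inr_le hconn (x := x) (f := f) (by rw [hrep]; exact Sym2.mem_mk_left u v)
      have := hdle x u
      omega
    | Sum.inr e, Sum.inl y =>
      obtain ⟨u, v, _, hrep⟩ := edge_repr e
      rw [SimpleGraph.dist_comm] at hab
      have := dist_inl_inr_le hconn (x := y) (f := e) (by rw [hrep]; exact Sym2.mem_mk_left u v)
      have := hdle y u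
      omega
    | Sum.inr e, Sum.inr f =>
      obtain ⟨x, y, hxy, hrepe⟩ := edge_repr e
      obtain ⟨u, v, huv, hrepf⟩ := edge_repr f
      have hmx : x ∈ (e : Sym2 V) := by rw [hrepe]; exact Sym2.mem_mk_left x y
      have hmy : y ∈ (e : Sym2 V) := by rw [hrepe]; exact Sym2.mem_mk_right x y
      have hmu : u ∈ (f : Sym2 V) := by rw [hrepf]; exact Sym2.mem_mk_left u v
      have hmv : v ∈ (f : Sym2 V) := by rw [hrepf]; exact Sym2.mem_mk_right u v
      have e1 := dist_inr_inr_le hconn hmx hmu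
      have e2 := dist_inr_inr_le hconn hmx hmv
      have e3 := dist_inr_inr_le hconn hmy hmu
      have e4 := dist_inr_inr_le hconn hmy hmv
      have d1 := hdle x u
      have d2 := hdle x v
      have d3 := hdle y u
      have d4 := hdle y v
      exact ⟨x, y, u, v, hxy, huv, by omega, by omega, by omega, by omega⟩
  · rintro ⟨x, y, u, v, hxy, huv, h1, h2, h3, h4⟩
    set e : S.edgeSet := ⟨s(x, y), hxy⟩ with he
    set f : S.edgeSet := ⟨s(u, v), huv⟩ with hf
    have hef : e ≠ f := by
      intro h
      have hx : x ∈ (f : Sym2 V) := by rw [← h]; exact Sym2.mem_mk_left x y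
      have : x = u ∨ x = v := by simpa [hf] using hx
      rcases this with rfl | rfl
      · have hz : S.diam = 0 := by rw [← h1]; simp
        rw [hz] at h2
        exact huv.ne (hconn.dist_eq_zero_iff.mp h2)
      · have hz : S.diam = 0 := by rw [← h2]; simp
        rw [hz] at h1
        exact huv.ne (hconn.dist_eq_zero_iff.mp h1).symm
    have hlow : 2 * S.diam + 2 ≤ (subdiv S).dist (Sum.inr e) (Sum.inr f) := by
      obtain ⟨w, hw⟩ := (hsconn.preconnected (Sum.inr e) (Sum.inr f)).exists_walk_length_eq_dist
      obtain ⟨p, q, hp, hq, hlen⟩ := le_of_walk_inr_inr hconn hef w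
      have hpq : S.dist p q = S.diam := by
        have hp' : p = x ∨ p = y := by simpa [he] using hp
        have hq' : q = u ∨ q = v := by simpa [hf] using hq
        rcases hp' with rfl | rfl <;> rcases hq' with rfl | rfl <;> assumption
      rw [← hw]
      omega
    have hup : (subdiv S).diam ≤ 2 * S.diam + 2 := by
      obtain ⟨a, b, hab⟩ := (subdiv S).exists_dist_eq_diam
      rw [← hab]
      match a, b with
      | Sum.inl x', Sum.inl y' =>
        have := dist_inl_inl_le hconn x' y'
        have := hdle x' y'
        omega
      | Sum.inl x', Sum.inr f' =>
        obtain ⟨u', v', _, hrep⟩ := edge_repr f'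
        have := dist_inl_inr_le hconn (x := x') (f := f')
          (by rw [hrep]; exact Sym2.mem_mk_left u' v')
        have := hdle x' u'
        omega
      | Sum.inr e', Sum.inl y' =>
        obtain ⟨u', v', _, hrep⟩ := edge_repr e'
        rw [SimpleGraph.dist_comm]
        have := dist_inl_inr_le hconn (x := y') (f := e')
          (by rw [hrep]; exact Sym2.mem_mk_left u' v')
        have := hdle y' u'
        omega
      | Sum.inr e', Sum.inr f' =>
        obtain ⟨x', y', _, hrepe⟩ := edge_repr e'
        obtain ⟨u', v', _, hrepf⟩ := edge_repr f'
        have := dist_inr_inr_le hconn (e := e') (f := f')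
          (by rw [hrepe]; exact Sym2.mem_mk_left x' y')
          (by rw [hrepf]; exact Sym2.mem_mk_left u' v')
        have := hdle x' u'
        omega
    have hd : 2 * S.diam + 2 ≤ (subdiv S).diam :=
      le_trans hlow ((subdiv S).dist_le_diam hsediam)
    omega
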